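/- arXiv:1504.07156 — 4 statements merged into one kernel-verified Lean document; each statement's English description precedes it below -/
import Mathlib

section
/- Let n ≥ 1 and let a be the interleaved permutation of {1,…,n} (a_i = (i+1)/2 for odd i, a_i = n+1-i/2 for even i). For 1 ≤ u ≤ v ≤ n with u ≡ v (mod 2), write v = u + 2l; then the sum ∑_{i=u}^{v} a_i equals (n+1)·l + k where k = a_v if u is odd and k = a_u if u is even, and moreover 1 ≤ k ≤ n. Consequently, distinct pairs (u,v) with u ≡ v (mod 2) give distinct sums, and hence the set S(a) of all consecutive sums ∑_{i=u}^{v} a_i (over 1 ≤ u ≤ v ≤ n) has cardinality at least n²/4. -/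
/-- For the interleaved permutation: the sum over an interval `[u,v]` with `u ≡ v (mod 2)`,
`v = u + 2l`, equals `(n+1)l + k` with `k = a v` if `u` odd, `k = a u` if `u` even, and
`1 ≤ k ≤ n`; distinct same-parity pairs give distinct sums; hence `|S(a)| ≥ n²/4`. -/
theorem stmt_2 (n : ℕ) (hn : 1 ≤ n) (a : ℕ → ℕ)
    (ha : ∀ i, i % 2 = 1 → a i = (i + 1) / 2)
    (hb : ∀ i, i % 2 = 0 → a i = n + 1 - i / 2) :
    (∀ u v l : ℕ, 1 ≤ u → u ≤ v → v ≤ n → v = u + 2 * l →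
      (∑ i ∈ Finset.Icc u v, a i) = (n + 1) * l + (if u % 2 = 1 then a v else a u) ∧
      1 ≤ (if u % 2 = 1 then a v else a u) ∧ (if u % 2 = 1 then a v else a u) ≤ n) ∧
    Set.InjOn (fun p : ℕ × ℕ => ∑ i ∈ Finset.Icc p.1 p.2, a i)
      {p : ℕ × ℕ | 1 ≤ p.1 ∧ p.1 ≤ p.2 ∧ p.2 ≤ n ∧ p.1 % 2 = p.2 % 2} ∧
    ((n : ℝ) ^ 2) / 4 ≤
      ((((Finset.Icc 1 n ×ˢ Finset.Icc 1 n).filter (fun p => p.1 ≤ p.2)).image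
        (fun p : ℕ × ℕ => ∑ i ∈ Finset.Icc p.1 p.2, a i)).card : ℝ) := by
  -- key sum formula
  have key : ∀ l u, 1 ≤ u → u + 2 * l ≤ n →
      (∑ i ∈ Finset.Icc u (u + 2 * l), a i)
        = (n + 1) * l + (if u % 2 = 1 then a (u + 2 * l) else a u) := by
    intro l
    induction l with
    | zero => intro u hu hun; simp
    | succ l ih =>
      intro u hu hun
      have h1 : u + 2 * (l + 1) = (u + 2 * l + 1) + 1 := by ring
      rw [h1, Finset.sum_Icc_succ_top (by omega), Finset.sum_Icc_succ_top (by omega),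
        ih u hu (by omega)]
      have hm : (n + 1) * (l + 1) = (n + 1) * l + (n + 1) := by ring
      rw [hm]
      rcases Nat.mod_two_eq_zero_or_one u with hp | hp
      · have e1 : a (u + 2 * l + 1) = (u + 2 * l + 1 + 1) / 2 := ha _ (by omega)
        have e2 : a (u + 2 * l + 1 + 1) = n + 1 - (u + 2 * l + 1 + 1) / 2 :=
          hb _ (by omega)
        rw [if_neg (by omega), if_neg (by omega), e1, e2]
        omega
      · have e1 : a (u + 2 * l + 1) = n + 1 - (u + 2 * l + 1) / 2 := hb _ (by omega)
        have e2 : a (u + 2 * l + 1 + 1) = (u + 2 * l + 1 + 1 + 1) / 2 := ha _ (by omega)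
        have e0 : a (u + 2 * l) = (u + 2 * l + 1) / 2 := ha _ (by omega)
        rw [if_pos hp, if_pos hp, e1, e2, e0]
        omega
  -- first bullet
  have first : ∀ u v l : ℕ, 1 ≤ u → u ≤ v → v ≤ n → v = u + 2 * l →
      (∑ i ∈ Finset.Icc u v, a i) = (n + 1) * l + (if u % 2 = 1 then a v else a u) ∧
      1 ≤ (if u % 2 = 1 then a v else a u) ∧ (if u % 2 = 1 then a v else a u) ≤ n := by
    intro u v l hu huv hvn hvl
    subst hvl
    refine ⟨key l u hu hvn, ?_, ?_⟩ <;>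
    · rcases Nat.mod_two_eq_zero_or_one u with hp | hp
      · rw [if_neg (by omega), hb u hp]; omega
      · rw [if_pos hp, ha (u + 2 * l) (by omega)]; omega
  -- sum representation
  have sumrep : ∀ u v : ℕ, 1 ≤ u → u ≤ v → v ≤ n → u % 2 = v % 2 →
      (∑ i ∈ Finset.Icc u v, a i)
        = (n + 1) * ((v - u) / 2) + (if u % 2 = 1 then a v else a u) := by
    intro u v hu huv hvn hpar
    have hv : v = u + 2 * ((v - u) / 2) := by omega
    exact ((first u v ((v - u) / 2) hu huv hvn hv).1)
  have kbound : ∀ u v : ℕ, 1 ≤ u → u ≤ v → v ≤ n → u % 2 = v % 2 →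
      1 ≤ (if u % 2 = 1 then a v else a u) ∧ (if u % 2 = 1 then a v else a u) ≤ n := by
    intro u v hu huv hvn hpar
    have hv : v = u + 2 * ((v - u) / 2) := by omega
    exact (first u v ((v - u) / 2) hu huv hvn hv).2
  -- injectivity
  have inj : Set.InjOn (fun p : ℕ × ℕ => ∑ i ∈ Finset.Icc p.1 p.2, a i)
      {p : ℕ × ℕ | 1 ≤ p.1 ∧ p.1 ≤ p.2 ∧ p.2 ≤ n ∧ p.1 % 2 = p.2 % 2} := by
    intro p hp q hq heq
    obtain ⟨hp1, hp2, hp3, hp4⟩ := hp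
    obtain ⟨hq1, hq2, hq3, hq4⟩ := hq
    simp only at heq
    rw [sumrep p.1 p.2 hp1 hp2 hp3 hp4, sumrep q.1 q.2 hq1 hq2 hq3 hq4] at heq
    set k1 := (if p.1 % 2 = 1 then a p.2 else a p.1) with hk1def
    set k2 := (if q.1 % 2 = 1 then a q.2 else a q.1) with hk2def
    obtain ⟨hk1a, hk1b⟩ := kbound p.1 p.2 hp1 hp2 hp3 hp4
    obtain ⟨hk2a, hk2b⟩ := kbound q.1 q.2 hq1 hq2 hq3 hq4
    -- extract k and l equalities via mod/div
    have hmod : k1 = k2 := by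
      have h1 : ((n + 1) * ((p.2 - p.1) / 2) + k1) % (n + 1) = k1 := by
        rw [Nat.mul_add_mod]; exact Nat.mod_eq_of_lt (by omega)
      have h2 : ((n + 1) * ((q.2 - q.1) / 2) + k2) % (n + 1) = k2 := by
        rw [Nat.mul_add_mod]; exact Nat.mod_eq_of_lt (by omega)
      rw [← h1, ← h2, heq]
    have hdiv : (p.2 - p.1) / 2 = (q.2 - q.1) / 2 := by
      have h1 : ((n + 1) * ((p.2 - p.1) / 2) + k1) / (n + 1) = (p.2 - p.1) / 2 := by
        rw [Nat.mul_add_div (by omega)]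
        have : k1 / (n + 1) = 0 := Nat.div_eq_of_lt (by omega)
        omega
      have h2 : ((n + 1) * ((q.2 - q.1) / 2) + k2) / (n + 1) = (q.2 - q.1) / 2 := by
        rw [Nat.mul_add_div (by omega)]
        have : k2 / (n + 1) = 0 := Nat.div_eq_of_lt (by omega)
        omega
      rw [← h1, ← h2, heq]
    -- express k in terms of u,v in each parity case
    have hk1 : (p.1 % 2 = 1 ∧ k1 = (p.2 + 1) / 2) ∨ (p.1 % 2 = 0 ∧ k1 = n + 1 - p.1 / 2) := by
      rcases Nat.mod_two_eq_zero_or_one p.1 with h | h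
      · right; exact ⟨h, by rw [hk1def, if_neg (by omega), hb p.1 h]⟩
      · left; exact ⟨h, by rw [hk1def, if_pos h, ha p.2 (by omega)]⟩
    have hk2 : (q.1 % 2 = 1 ∧ k2 = (q.2 + 1) / 2) ∨ (q.1 % 2 = 0 ∧ k2 = n + 1 - q.1 / 2) := by
      rcases Nat.mod_two_eq_zero_or_one q.1 with h | h
      · right; exact ⟨h, by rw [hk2def, if_neg (by omega), hb q.1 h]⟩
      · left; exact ⟨h, by rw [hk2def, if_pos h, ha q.2 (by omega)]⟩
    rcases hk1 with ⟨hpo, hke⟩ | ⟨hpo, hke⟩ <;> rcases hk2 with ⟨hqo, hke'⟩ | ⟨hqo, hke'⟩ <;>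
      exact Prod.ext (by omega) (by omega)
  refine ⟨first, inj, ?_⟩
  -- cardinality
  set f : ℕ × ℕ → ℕ := fun p => ∑ i ∈ Finset.Icc p.1 p.2, a i with hf
  set c := (n + 1) / 2 with hc
  set T := (Finset.Icc 1 n ×ˢ Finset.Icc 1 n).filter
      (fun p => p.1 ≤ p.2 ∧ p.1 % 2 = p.2 % 2) with hT
  have hTsub : T ⊆ (Finset.Icc 1 n ×ˢ Finset.Icc 1 n).filter (fun p => p.1 ≤ p.2) := by
    intro p hp
    simp only [hT, Finset.mem_filter] at hp ⊢
    exact ⟨hp.1, hp.2.1⟩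
  have hsub : ↑T ⊆ {p : ℕ × ℕ | 1 ≤ p.1 ∧ p.1 ≤ p.2 ∧ p.2 ≤ n ∧ p.1 % 2 = p.2 % 2} := by
    intro p hp
    simp only [hT, Finset.coe_filter, Set.mem_setOf_eq, Finset.mem_product,
      Finset.mem_Icc] at hp ⊢
    omega
  have himg : (T.image f).card = T.card :=
    Finset.card_image_of_injOn (inj.mono hsub)
  have hmono : T.image f ⊆ ((Finset.Icc 1 n ×ˢ Finset.Icc 1 n).filter
      (fun p => p.1 ≤ p.2)).image f := Finset.image_subset_image hTsub
  -- grid injection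
  have hgrid : (Finset.Icc 1 c ×ˢ Finset.Icc 1 c).card ≤ T.card := by
    apply Finset.card_le_card_of_injOn
      (fun p : ℕ × ℕ => if p.1 ≤ p.2 then (2 * p.1 - 1, 2 * p.2 - 1) else (2 * p.2, 2 * (p.1 - 1)))
    · intro p hp
      simp only [Finset.coe_product, Set.mem_prod, Finset.mem_coe, Finset.mem_product, Finset.mem_Icc] at hp
      simp only [hT, Finset.mem_coe, Finset.mem_filter, Finset.mem_product, Finset.mem_Icc]
      split_ifs with h <;> omega
    · intro p hp q hq heq
      simp only [Finset.coe_product, Set.mem_prod, Finset.mem_coe, Finset.mem_Icc] at hp hq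
      simp only at heq
      split_ifs at heq with h1 h2 h2 <;>
        (rw [Prod.mk.injEq] at heq; exact Prod.ext (by omega) (by omega))
  have hcard : (Finset.Icc 1 c ×ˢ Finset.Icc 1 c).card = c * c := by
    rw [Finset.card_product, Nat.card_Icc]
    simp
  have h2c : n ≤ 2 * c := by omega
  have hchain : c * c ≤ (((Finset.Icc 1 n ×ˢ Finset.Icc 1 n).filter
      (fun p : ℕ × ℕ => p.1 ≤ p.2)).image f).card := by
    calc c * c = (Finset.Icc 1 c ×ˢ Finset.Icc 1 c).card := hcard.symm
      _ ≤ T.card := hgrid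
      _ = (T.image f).card := himg.symm
      _ ≤ _ := Finset.card_le_card hmono
  have hcR : (n : ℝ) ≤ 2 * (c : ℝ) := by exact_mod_cast h2c
  have hfin : ((c * c : ℕ) : ℝ) ≤ ((((Finset.Icc 1 n ×ˢ Finset.Icc 1 n).filter
      (fun p : ℕ × ℕ => p.1 ≤ p.2)).image f).card : ℝ) := by exact_mod_cast hchain
  have : ((n : ℝ) ^ 2) / 4 ≤ ((c * c : ℕ) : ℝ) := by
    push_cast
    nlinarith [hcR]
  linarith
end

section
/- For any permutation a of {1,…,n}, for every k with 1 ≤ k ≤ (n+1)/4, the following holds: |S_k(a)| + |S_{k-1}(a)| ≥ √(2n), where S_k(a) is the set of elements s of S(a) satisfying kn + 1 ≤ s ≤ (k+1)n. -/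
/-- The set of consecutive sums of the sequence `a` on `{1,…,n}`. -/
def Sfin (n : ℕ) (a : ℕ → ℕ) : Finset ℕ :=
  ((Finset.Icc 1 n ×ˢ Finset.Icc 1 n).filter (fun p => p.1 ≤ p.2)).image
    (fun p : ℕ × ℕ => ∑ i ∈ Finset.Icc p.1 p.2, a i)

lemma mem_Sfin_aux {n : ℕ} (a : ℕ → ℕ) {u v : ℕ} (h1 : 1 ≤ u) (h2 : u ≤ v) (h3 : v ≤ n) :
    (∑ i ∈ Finset.Icc u v, a i) ∈ Sfin n a := by
  refine Finset.mem_image.2 ⟨(u, v), ?_, rfl⟩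
  simp only [Finset.mem_filter, Finset.mem_product, Finset.mem_Icc]
  omega

/-- Crossing lemma: a `ℕ`-valued sequence starting `≤ B` and ending `> B`
crosses `B` somewhere. -/
lemma cross_aux (f : ℕ → ℕ) (B : ℕ) (m : ℕ) (h0 : f 0 ≤ B) (hm : B < f m) :
    ∃ j, j < m ∧ f j ≤ B ∧ B < f (j + 1) := by
  induction m with
  | zero => omega
  | succ m ih =>
    by_cases h : B < f m
    · obtain ⟨j, hj1, hj2, hj3⟩ := ih h
      exact ⟨j, by omega, hj2, hj3⟩
    · exact ⟨m, by omega, by omega, hm⟩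

/-- For any permutation `a` of `{1,…,n}` and `1 ≤ k ≤ (n+1)/4`,
`|S_k(a)| + |S_{k-1}(a)| ≥ √(2n)`, where `S_k(a) = S(a) ∩ [kn+1, (k+1)n]`. -/
theorem stmt_7 (n : ℕ) (a : ℕ → ℕ) (hperm : Set.BijOn a (Set.Icc 1 n) (Set.Icc 1 n))
    (k : ℕ) (hk1 : 1 ≤ k) (hk : 4 * k ≤ n + 1) :
    Real.sqrt (2 * n) ≤
      ((((Sfin n a).filter (fun s => k * n + 1 ≤ s ∧ s ≤ (k + 1) * n)).card : ℝ) +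
       (((Sfin n a).filter (fun s => (k - 1) * n + 1 ≤ s ∧ s ≤ k * n)).card : ℝ)) := by
  classical
  set S1 := (Sfin n a).filter (fun s => k * n + 1 ≤ s ∧ s ≤ (k + 1) * n) with hS1
  set S2 := (Sfin n a).filter (fun s => (k - 1) * n + 1 ≤ s ∧ s ≤ k * n) with hS2
  set T := S1 ∪ S2 with hT
  -- basic facts about a
  have hval : ∀ i, 1 ≤ i → i ≤ n → 1 ≤ a i ∧ a i ≤ n := by
    intro i h1 h2
    have := hperm.mapsTo (Set.mem_Icc.2 ⟨h1, h2⟩)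
    exact Set.mem_Icc.1 this
  have hKa : (k + 1) * n = k * n + n := by ring
  have hKb : (k - 1) * n = k * n - n := by rw [Nat.sub_mul, one_mul]
  have hKn : n ≤ k * n := Nat.le_mul_of_pos_left n hk1
  -- total sum
  have hsum : ∑ i ∈ Finset.Icc 1 n, a i = ∑ i ∈ Finset.Icc 1 n, i := by
    refine Finset.sum_bij (fun x _ => a x) ?_ ?_ ?_ ?_
    · intro x hx
      rw [Finset.mem_Icc] at hx ⊢
      exact hval x hx.1 hx.2
    · intro x hx y hy hxy
      rw [Finset.mem_Icc] at hx hy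
      exact hperm.injOn (Set.mem_Icc.2 hx) (Set.mem_Icc.2 hy) hxy
    · intro b hb
      rw [Finset.mem_Icc] at hb
      obtain ⟨x, hx, hxb⟩ := hperm.surjOn (Set.mem_Icc.2 hb)
      rw [Set.mem_Icc] at hx
      exact ⟨x, Finset.mem_Icc.2 hx, hxb⟩
    · intro x _; rfl
  have gauss : ∀ m : ℕ, 2 * (∑ i ∈ Finset.Icc 1 m, i) = m * (m + 1) := by
    intro m
    induction m with
    | zero => simp
    | succ m ih =>
      rw [Finset.sum_Icc_succ_top (by omega : 1 ≤ m + 1)]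
      have h5 : (m + 1) * (m + 1 + 1) = m * (m + 1) + 2 * (m + 1) := by ring
      omega
  have htot : 2 * (∑ i ∈ Finset.Icc 1 n, a i) = n * (n + 1) := by
    rw [hsum]; exact gauss n
  have htot2 : 2 * (k * n) ≤ ∑ i ∈ Finset.Icc 1 n, a i := by
    have h4 : 4 * (k * n) ≤ (n + 1) * n := by
      calc 4 * (k * n) = (4 * k) * n := by ring
      _ ≤ (n + 1) * n := Nat.mul_le_mul_right n hk
    have h5 : (n + 1) * n = n * (n + 1) := by ring
    omega
  -- key step: every value a u is a difference of two elements of T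
  have key : ∀ u, 1 ≤ u → u ≤ n → ∃ x y : ℕ, x ∈ T ∧ y ∈ T ∧ x = y + a u := by
    intro u hu1 hu2
    have hau := hval u hu1 hu2
    by_cases hcase : k * n < ∑ i ∈ Finset.Icc u n, a i
    · -- forward sums
      obtain ⟨j, hj1, hj2, hj3⟩ := cross_aux (fun t => ∑ i ∈ Finset.Icc u (u + t), a i)
        (k * n) (n - u) (by simpa using hau.2.trans hKn) (by
          simpa [Nat.add_sub_cancel' hu2] using hcase)
      rw [← Nat.add_assoc] at hj3
      set v := u + j + 1 with hv
      have hvn : v ≤ n := by omega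
      have hstep : ∑ i ∈ Finset.Icc u v, a i = (∑ i ∈ Finset.Icc u (u + j), a i) + a v := by
        have := Finset.sum_Icc_succ_top (a := u) (b := u + j) (by omega) a
        simpa [hv] using this
      have hav := hval v (by omega) hvn
      set x := ∑ i ∈ Finset.Icc u v, a i with hx
      set y := ∑ i ∈ Finset.Icc (u + 1) v, a i with hy
      have hxy : x = a u + y := by
        rw [hx, hy, Finset.Icc_eq_cons_Ioc (by omega : u ≤ v), Finset.sum_cons,
          Finset.Icc_add_one_left_eq_Ioc]
      have hx1 : k * n + 1 ≤ x := by rw [hx]; omega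
      have hx2 : x ≤ (k + 1) * n := by rw [hKa]; omega
      have hxT : x ∈ T := by
        refine Finset.mem_union_left _ (Finset.mem_filter.2 ⟨?_, hx1, hx2⟩)
        exact mem_Sfin_aux a hu1 (by omega) hvn
      have hySfin : y ∈ Sfin n a := mem_Sfin_aux a (by omega) (by omega) hvn
      have hyT : y ∈ T := by
        by_cases hyc : y ≤ k * n
        · refine Finset.mem_union_right _ (Finset.mem_filter.2 ⟨hySfin, ?_, hyc⟩)
          omega
        · refine Finset.mem_union_left _ (Finset.mem_filter.2 ⟨hySfin, by omega, by omega⟩)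
      exact ⟨x, y, hxT, hyT, by rw [hxy, Nat.add_comm]⟩
    · -- backward sums
      push_neg at hcase
      have hsplit : (∑ i ∈ Finset.Icc 1 u, a i) + (∑ i ∈ Finset.Icc u n, a i)
          = (∑ i ∈ Finset.Icc 1 n, a i) + a u := by
        have h1 : ∑ i ∈ Finset.Icc 1 u, a i = (∑ i ∈ Finset.Icc 1 (u - 1), a i) + a u := by
          have := Finset.sum_Icc_succ_top (a := 1) (b := u - 1) (by omega) a
          have hu' : u - 1 + 1 = u := by omega
          rw [hu'] at this
          exact this
        have h2 : (∑ i ∈ Finset.Icc 1 (u - 1), a i) + (∑ i ∈ Finset.Icc u n, a i)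
            = ∑ i ∈ Finset.Icc 1 n, a i := by
          rw [← Finset.sum_union]
          · congr 1
            ext x
            simp only [Finset.mem_union, Finset.mem_Icc]
            omega
          · rw [Finset.disjoint_left]
            intro x hx hx'
            rw [Finset.mem_Icc] at hx hx'
            omega
        omega
      have hQ1 : k * n < ∑ i ∈ Finset.Icc 1 u, a i := by omega
      obtain ⟨j, hj1, hj2, hj3⟩ := cross_aux (fun t => ∑ i ∈ Finset.Icc (u - t) u, a i)
        (k * n) (u - 1) (by simpa using hau.2.trans hKn) (by
          have : u - (u - 1) = 1 := by omega
          simpa [this] using hQ1)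
      set w := u - (j + 1) with hw
      have hw1 : 1 ≤ w := by omega
      have hwu : w < u := by omega
      have hwj : u - j = w + 1 := by omega
      have hstep : ∑ i ∈ Finset.Icc w u, a i = a w + ∑ i ∈ Finset.Icc (w + 1) u, a i := by
        rw [Finset.Icc_eq_cons_Ioc (by omega : w ≤ u), Finset.sum_cons, Finset.Icc_add_one_left_eq_Ioc]
      have haw := hval w hw1 (by omega)
      set x := ∑ i ∈ Finset.Icc w u, a i with hx
      set y := ∑ i ∈ Finset.Icc w (u - 1), a i with hy
      have hxy : x = y + a u := by
        rw [hx, hy]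
        have := Finset.sum_Icc_succ_top (a := w) (b := u - 1) (by omega) a
        have hu' : u - 1 + 1 = u := by omega
        rw [hu'] at this
        exact this
      rw [hwj] at hj2
      have hx1 : k * n + 1 ≤ x := by rw [hx]; omega
      have hx2 : x ≤ (k + 1) * n := by rw [hKa]; omega
      have hxT : x ∈ T := by
        refine Finset.mem_union_left _ (Finset.mem_filter.2 ⟨?_, hx1, hx2⟩)
        exact mem_Sfin_aux a hw1 (by omega) hu2
      have hySfin : y ∈ Sfin n a := mem_Sfin_aux a hw1 (by omega) (by omega)
      have hyT : y ∈ T := by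
        by_cases hyc : y ≤ k * n
        · refine Finset.mem_union_right _ (Finset.mem_filter.2 ⟨hySfin, ?_, hyc⟩)
          omega
        · refine Finset.mem_union_left _ (Finset.mem_filter.2 ⟨hySfin, by omega, by omega⟩)
      exact ⟨x, y, hxT, hyT, hxy⟩
  -- injection from values into strictly ordered pairs of T
  set D := (T ×ˢ T).filter (fun p => p.2 < p.1) with hD
  have key' : ∀ j ∈ Finset.Icc 1 n, ∃ p : ℕ × ℕ, p ∈ D ∧ p.1 = p.2 + j := by
    intro j hj
    rw [Finset.mem_Icc] at hj
    obtain ⟨u, hu, hau⟩ := hperm.surjOn (Set.mem_Icc.2 hj)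
    rw [Set.mem_Icc] at hu
    obtain ⟨x, y, hxT, hyT, hxy⟩ := key u hu.1 hu.2
    refine ⟨(x, y), ?_, ?_⟩
    · rw [hD, Finset.mem_filter, Finset.mem_product]
      refine ⟨⟨hxT, hyT⟩, ?_⟩
      simp only
      have : 1 ≤ a u := (hval u hu.1 hu.2).1
      omega
    · simp [hxy, hau]
  have hcard1 : n ≤ D.card := by
    have : (Finset.Icc 1 n).card ≤ D.card := by
      apply Finset.card_le_card_of_injOn
        (fun j => if h : j ∈ Finset.Icc 1 n then (key' j h).choose else (0, 0))
      · intro j hj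
        simp only [Finset.mem_coe] at hj ⊢
        simp only [dif_pos hj]
        exact ((key' j hj).choose_spec).1
      · intro j1 h1 j2 h2 heq
        simp only [Finset.mem_coe] at h1 h2
        simp only [dif_pos h1, dif_pos h2] at heq
        have e1 := ((key' j1 h1).choose_spec).2
        have e2 := ((key' j2 h2).choose_spec).2
        rw [heq] at e1
        omega
    simpa [Nat.card_Icc] using this
  -- 2 * |D| ≤ |T|^2
  have hcard2 : 2 * D.card ≤ T.card * T.card := by
    set D' := D.image Prod.swap with hD'
    have hDcard : D'.card = D.card :=
      Finset.card_image_of_injective _ Prod.swap_injective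
    have hdisj : Disjoint D D' := by
      rw [Finset.disjoint_left]
      intro p hp hp'
      rw [hD, Finset.mem_filter] at hp
      rw [hD', Finset.mem_image] at hp'
      obtain ⟨q, hq, hqp⟩ := hp'
      rw [hD, Finset.mem_filter] at hq
      have : q.1 = p.2 ∧ q.2 = p.1 := by
        constructor <;> (rw [← hqp]; rfl)
      omega
    have hsub : D ∪ D' ⊆ T ×ˢ T := by
      intro p hp
      rcases Finset.mem_union.1 hp with h | h
      · rw [hD, Finset.mem_filter] at h; exact h.1
      · rw [hD', Finset.mem_image] at h
        obtain ⟨q, hq, hqp⟩ := h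
        rw [hD, Finset.mem_filter, Finset.mem_product] at hq
        rw [Finset.mem_product, ← hqp]
        exact ⟨hq.1.2, hq.1.1⟩
    have := Finset.card_le_card hsub
    rw [Finset.card_union_of_disjoint hdisj, hDcard, Finset.card_product] at this
    omega
  have hcard3 : 2 * n ≤ (S1.card + S2.card) * (S1.card + S2.card) := by
    have hTle : T.card ≤ S1.card + S2.card := Finset.card_union_le _ _
    calc 2 * n ≤ 2 * D.card := by omega
    _ ≤ T.card * T.card := hcard2
    _ ≤ (S1.card + S2.card) * (S1.card + S2.card) := Nat.mul_le_mul hTle hTle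
  -- conclude over ℝ
  have h1 : (2 * n : ℝ) ≤ ((S1.card + S2.card : ℕ) : ℝ) ^ 2 := by
    rw [sq]
    exact_mod_cast hcard3
  have h2 := Real.sqrt_le_sqrt h1
  rw [Real.sqrt_sq (by positivity)] at h2
  calc Real.sqrt (2 * n) ≤ ((S1.card + S2.card : ℕ) : ℝ) := h2
  _ = (S1.card : ℝ) + (S2.card : ℝ) := by push_cast; ring
end

section
/- Let f : [0,1] → [0,1] be measurable with ∫_x^y f over every interval well-defined, satisfying: (i) ∫_E f ≥ |E|²/2 for every measurable E ⊆ [0,1], (ii) ∫_0^1 f = 1/2, and (iii) there exists κ ∈ [0,1] with ∫_0^κ f = ∫_κ^1 f = 1/4 such that f is increasing on [0,κ] and decreasing on [κ,1]. Then the set L(f) := { (x,y) ∈ [0,1]² : x ≤ y and ∫_x^y f(t) dt ≥ 1/4 } is convex. -/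
open MeasureTheory

/-- For `f ∈ F_mon` (measurable `f : [0,1] → [0,1]` with `∫_E f ≥ |E|²/2`, total integral
`1/2`, split point `κ` with both halves `1/4`, increasing on `[0,κ]`, decreasing on `[κ,1]`),
the region `L(f) = {(x,y) : x ≤ y, ∫_x^y f ≥ 1/4}` is convex. -/
theorem stmt_9 (f : ℝ → ℝ) (κ : ℝ) (hκ : κ ∈ Set.Icc (0 : ℝ) 1)
    (hmeas : Measurable f)
    (hrange : ∀ x ∈ Set.Icc (0 : ℝ) 1, f x ∈ Set.Icc (0 : ℝ) 1)
    (hlow : ∀ E : Set ℝ, E ⊆ Set.Icc 0 1 → MeasurableSet E →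
      (volume E).toReal ^ 2 / 2 ≤ ∫ x in E, f x)
    (htotal : ∫ x in (0 : ℝ)..1, f x = 1 / 2)
    (hhalf1 : ∫ x in (0 : ℝ)..κ, f x = 1 / 4)
    (hhalf2 : ∫ x in κ..1, f x = 1 / 4)
    (hmono : MonotoneOn f (Set.Icc 0 κ))
    (hanti : AntitoneOn f (Set.Icc κ 1)) :
    Convex ℝ {p : ℝ × ℝ | p.1 ∈ Set.Icc (0 : ℝ) 1 ∧ p.2 ∈ Set.Icc (0 : ℝ) 1 ∧
      p.1 ≤ p.2 ∧ 1 / 4 ≤ ∫ t in p.1..p.2, f t} := by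
  obtain ⟨hκ0, hκ1⟩ := hκ
  -- interval integrability on subintervals of [0,1]
  have hint : ∀ a b : ℝ, 0 ≤ a → a ≤ b → b ≤ 1 → IntervalIntegrable f volume a b := by
    intro a b ha hab hb1
    rw [intervalIntegrable_iff_integrableOn_Ioc_of_le hab]
    refine Measure.integrableOn_of_bounded (M := 1) (by simp) hmeas.aestronglyMeasurable ?_
    filter_upwards [ae_restrict_mem measurableSet_Ioc] with t ht
    have h := hrange t ⟨le_trans ha ht.1.le, le_trans ht.2 hb1⟩
    rw [Real.norm_eq_abs, abs_le]
    exact ⟨by linarith [h.1], h.2⟩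
  set F : ℝ → ℝ := fun x => ∫ t in (0 : ℝ)..x, f t with hFdef
  have hFab : ∀ a b : ℝ, 0 ≤ a → a ≤ b → b ≤ 1 →
      (∫ t in a..b, f t) = F b - F a := by
    intro a b ha hab hb1
    have h1 := intervalIntegral.integral_add_adjacent_intervals
      (hint 0 a le_rfl ha (le_trans hab hb1)) (hint a b ha hab hb1)
    simp only [hFdef]
    linarith [h1]
  -- lower bound on interval integrals
  have hlow' : ∀ a b : ℝ, 0 ≤ a → a ≤ b → b ≤ 1 → (b - a) ^ 2 / 2 ≤ ∫ t in a..b, f t := by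
    intro a b ha hab hb1
    rw [intervalIntegral.integral_of_le hab]
    have h := hlow (Set.Ioc a b)
      (fun t ht => ⟨le_trans ha ht.1.le, le_trans ht.2 hb1⟩) measurableSet_Ioc
    rwa [Real.volume_Ioc, ENNReal.toReal_ofReal (by linarith)] at h
  -- F values
  have hFκ : F κ = 1 / 4 := hhalf1
  have hF1 : F 1 = 1 / 2 := htotal
  have hF0 : F 0 = 0 := by simp [hFdef]
  -- membership forces x ≤ κ ≤ y
  have hforce : ∀ x y : ℝ, 0 ≤ x → x ≤ 1 → 0 ≤ y → y ≤ 1 → x ≤ y →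
      1 / 4 ≤ ∫ t in x..y, f t → x ≤ κ ∧ κ ≤ y := by
    intro x y hx hx1 hy hy1 hxy hI
    rw [hFab x y hx hxy hy1] at hI
    constructor
    · by_contra h
      push_neg at h
      -- κ < x : then ∫_κ^x f ≥ (x-κ)²/2 > 0 and F y ≤ F 1 gives contradiction
      have h1 := hlow' κ x hκ0 h.le hx1
      have h2 := hlow' y 1 hy hy1 le_rfl
      rw [hFab κ x hκ0 h.le hx1] at h1
      rw [hFab y 1 hy hy1 le_rfl] at h2
      have hd : 0 < x - κ := by linarith
      have hpos : 0 < (x - κ) ^ 2 / 2 := by positivity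
      nlinarith
    · by_contra h
      push_neg at h
      have h1 := hlow' y κ hy h.le hκ1
      have h2 := hlow' 0 x le_rfl hx hx1
      rw [hFab y κ hy h.le hκ1] at h1
      rw [hFab 0 x le_rfl hx hx1] at h2
      have hd : 0 < κ - y := by linarith
      have hpos : 0 < (κ - y) ^ 2 / 2 := by positivity
      nlinarith
  -- convexity of F on [0, κ]
  have hconv : ConvexOn ℝ (Set.Icc 0 κ) F := by
    apply convexOn_of_slope_mono_adjacent (convex_Icc 0 κ)
    intro x y z hx hz hxy hyz
    have hy : y ∈ Set.Icc 0 κ := ⟨le_trans hx.1 hxy.le, le_trans hyz.le hz.2⟩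
    have hy1 : y ≤ 1 := le_trans hy.2 hκ1
    have hz1 : z ≤ 1 := le_trans hz.2 hκ1
    have hub : (∫ t in x..y, f t) ≤ (y - x) * f y := by
      have := intervalIntegral.integral_mono_on hxy.le
        (hint x y hx.1 hxy.le hy1) intervalIntegrable_const
        (fun t ht => hmono ⟨le_trans hx.1 ht.1, le_trans ht.2 hy.2⟩ hy ht.2)
      simpa [smul_eq_mul, mul_comm] using this
    have hlb : (z - y) * f y ≤ ∫ t in y..z, f t := by
      have := intervalIntegral.integral_mono_on hyz.le
        intervalIntegrable_const (hint y z hy.1 hyz.le hz1)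
        (fun t ht => hmono hy ⟨le_trans hy.1 ht.1, le_trans ht.2 hz.2⟩ ht.1)
      simpa [smul_eq_mul, mul_comm] using this
    rw [hFab x y hx.1 hxy.le hy1] at hub
    rw [hFab y z hy.1 hyz.le hz1] at hlb
    rw [div_le_div_iff₀ (by linarith) (by linarith)]
    nlinarith
  -- concavity of F on [κ, 1]
  have hconc : ConcaveOn ℝ (Set.Icc κ 1) F := by
    apply concaveOn_of_slope_anti_adjacent (convex_Icc κ 1)
    intro x y z hx hz hxy hyz
    have hy : y ∈ Set.Icc κ 1 := ⟨le_trans hx.1 hxy.le, le_trans hyz.le hz.2⟩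
    have hx0 : 0 ≤ x := le_trans hκ0 hx.1
    have hy0 : 0 ≤ y := le_trans hκ0 hy.1
    have hlb : (y - x) * f y ≤ ∫ t in x..y, f t := by
      have := intervalIntegral.integral_mono_on hxy.le
        intervalIntegrable_const (hint x y hx0 hxy.le hy.2)
        (fun t ht => hanti ⟨le_trans hx.1 ht.1, le_trans ht.2 hy.2⟩ hy ht.2)
      simpa [smul_eq_mul, mul_comm] using this
    have hub : (∫ t in y..z, f t) ≤ (z - y) * f y := by
      have := intervalIntegral.integral_mono_on hyz.le
        (hint y z hy0 hyz.le hz.2) intervalIntegrable_const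
        (fun t ht => hanti hy ⟨le_trans hy.1 ht.1, le_trans ht.2 hz.2⟩ ht.1)
      simpa [smul_eq_mul, mul_comm] using this
    rw [hFab x y hx0 hxy.le hy.2] at hlb
    rw [hFab y z hy0 hyz.le hz.2] at hub
    rw [div_le_div_iff₀ (by linarith) (by linarith)]
    nlinarith
  -- conclude
  rintro ⟨x1, y1⟩ ⟨hx1, hy1, hxy1, hI1⟩ ⟨x2, y2⟩ ⟨hx2, hy2, hxy2, hI2⟩ a b ha hb hab
  simp only [Set.mem_setOf_eq, Prod.smul_mk, Prod.mk_add_mk, Prod.fst, Prod.snd]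
  obtain ⟨hx1κ, hκy1⟩ := hforce x1 y1 hx1.1 hx1.2 hy1.1 hy1.2 hxy1 hI1
  obtain ⟨hx2κ, hκy2⟩ := hforce x2 y2 hx2.1 hx2.2 hy2.1 hy2.2 hxy2 hI2
  have hxmem : a • x1 + b • x2 ∈ Set.Icc (0 : ℝ) κ :=
    (convex_Icc 0 κ) ⟨hx1.1, hx1κ⟩ ⟨hx2.1, hx2κ⟩ ha hb hab
  have hymem : a • y1 + b • y2 ∈ Set.Icc κ 1 :=
    (convex_Icc κ 1) ⟨hκy1, hy1.2⟩ ⟨hκy2, hy2.2⟩ ha hb hab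
  have h1 := hconv.2 (⟨hx1.1, hx1κ⟩ : x1 ∈ Set.Icc 0 κ) ⟨hx2.1, hx2κ⟩ ha hb hab
  have h2 := hconc.2 (⟨hκy1, hy1.2⟩ : y1 ∈ Set.Icc κ 1) ⟨hκy2, hy2.2⟩ ha hb hab
  rw [hFab x1 y1 hx1.1 hxy1 hy1.2] at hI1
  rw [hFab x2 y2 hx2.1 hxy2 hy2.2] at hI2
  refine ⟨⟨hxmem.1, le_trans hxmem.2 hκ1⟩, ⟨le_trans hκ0 hymem.1, hymem.2⟩,
    le_trans hxmem.2 hymem.1, ?_⟩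
  rw [hFab _ _ hxmem.1 (le_trans hxmem.2 hymem.1) hymem.2]
  simp only [smul_eq_mul] at h1 h2 ⊢
  nlinarith
end

section
/- The tent map f(x) = min(2x, 2(1−x)) on [0,1] satisfies ∫_E f(x) dx ≥ |E|²/2 for every measurable set E ⊆ [0,1], with equality when E = [0,t] ∪ [1−t, 1]. -/
open MeasureTheory

open Set


lemma vol_union (t : ℝ) (ht0 : 0 ≤ t) (ht : t ≤ 1/2) :
    volume (Icc 0 t ∪ Icc (1-t) 1) = ENNReal.ofReal (2*t) := by
  have hinter : Icc (0:ℝ) t ∩ Icc (1-t) 1 = Icc (1-t) t := by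
    rw [Set.Icc_inter_Icc, max_eq_right (by linarith : (0:ℝ) ≤ 1-t),
      min_eq_left (by linarith : t ≤ 1)]
  have h := measure_union_add_inter (μ := volume) (Icc (0:ℝ) t) (measurableSet_Icc (a := (1:ℝ)-t) (b := 1))
  rw [hinter, Real.volume_Icc, Real.volume_Icc, Real.volume_Icc,
    ENNReal.ofReal_eq_zero.mpr (by linarith : t - (1-t) ≤ 0)] at h
  rw [add_zero] at h
  rw [h, ← ENNReal.ofReal_add (by linarith) (by linarith)]
  ring_nf

lemma int_Icc_left (t : ℝ) (ht0 : 0 ≤ t) (ht : t ≤ 1/2) :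
    ∫ x in Icc (0:ℝ) t, min (2*x) (2*(1-x)) = t^2 := by
  rw [setIntegral_congr_fun measurableSet_Icc (g := fun x => 2*x)
    (fun x hx => min_eq_left (by simp at hx; linarith [hx.1, hx.2]))]
  rw [MeasureTheory.integral_Icc_eq_integral_Ioc, ← intervalIntegral.integral_of_le ht0,
    intervalIntegral.integral_const_mul, integral_id]
  ring

lemma int_Icc_right (t : ℝ) (ht0 : 0 ≤ t) (ht : t ≤ 1/2) :
    ∫ x in Icc (1-t) (1:ℝ), min (2*x) (2*(1-x)) = t^2 := by
  rw [setIntegral_congr_fun measurableSet_Icc (g := fun x => 2 - 2*x)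
    (fun x hx => by
      have h1 := hx.1; have h2 := hx.2
      rw [min_eq_right (by linarith)]; ring)]
  rw [MeasureTheory.integral_Icc_eq_integral_Ioc,
    ← intervalIntegral.integral_of_le (by linarith : (1:ℝ)-t ≤ 1),
    intervalIntegral.integral_sub intervalIntegrable_const
      ((by fun_prop : Continuous (fun x:ℝ => 2*x)).intervalIntegrable _ _),
    intervalIntegral.integral_const, intervalIntegral.integral_const_mul,
    integral_id, smul_eq_mul]
  ring

lemma int_union (t : ℝ) (ht0 : 0 ≤ t) (ht : t ≤ 1/2) :
    ∫ x in Icc (0:ℝ) t ∪ Icc (1-t) 1, min (2*x) (2*(1-x)) = 2*t^2 := by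
  have hcont : Continuous (fun x : ℝ => min (2*x) (2*(1-x))) := by fun_prop
  have hdisj : AEDisjoint volume (Icc (0:ℝ) t) (Icc (1-t) 1) := by
    unfold AEDisjoint
    rw [Set.Icc_inter_Icc, max_eq_right (by linarith : (0:ℝ) ≤ 1-t),
      min_eq_left (by linarith : t ≤ 1), Real.volume_Icc]
    exact ENNReal.ofReal_eq_zero.mpr (by linarith)
  rw [integral_union_ae hdisj measurableSet_Icc.nullMeasurableSet
    (hcont.integrableOn_Icc) (hcont.integrableOn_Icc),
    int_Icc_left t ht0 ht, int_Icc_right t ht0 ht]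
  ring

/-- The tent map satisfies `∫_E f ≥ |E|²/2` for every measurable `E ⊆ [0,1]`, with
equality when `E = [0,t] ∪ [1−t,1]` (for `0 ≤ t ≤ 1/2`). -/
theorem stmt_11 (f : ℝ → ℝ) (hf : ∀ x : ℝ, f x = min (2 * x) (2 * (1 - x))) :
    (∀ E : Set ℝ, E ⊆ Set.Icc 0 1 → MeasurableSet E →
      (volume E).toReal ^ 2 / 2 ≤ ∫ x in E, f x) ∧
    (∀ t : ℝ, 0 ≤ t → t ≤ 1 / 2 →
      ∫ x in (Set.Icc 0 t ∪ Set.Icc (1 - t) 1), f x =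
        (volume (Set.Icc (0 : ℝ) t ∪ Set.Icc (1 - t) 1)).toReal ^ 2 / 2) := by
  have hfe : f = fun x => min (2*x) (2*(1-x)) := funext hf
  have hcont : Continuous f := by rw [hfe]; fun_prop
  have part2 : ∀ t : ℝ, 0 ≤ t → t ≤ 1 / 2 →
      ∫ x in (Set.Icc 0 t ∪ Set.Icc (1 - t) 1), f x =
        (volume (Set.Icc (0 : ℝ) t ∪ Set.Icc (1 - t) 1)).toReal ^ 2 / 2 := by
    intro t ht0 ht
    rw [hfe, int_union t ht0 ht, vol_union t ht0 ht,
      ENNReal.toReal_ofReal (by linarith)]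
    ring
  refine ⟨?_, part2⟩
  intro E hE hEm
  have hvolE : volume E ≤ 1 := by
    calc volume E ≤ volume (Icc (0:ℝ) 1) := measure_mono hE
    _ = 1 := by rw [Real.volume_Icc]; norm_num
  have hfin : volume E ≠ ⊤ := ne_top_of_le_ne_top (by norm_num) hvolE
  set m := (volume E).toReal with hm
  have hm0 : 0 ≤ m := ENNReal.toReal_nonneg
  have hm1 : m ≤ 1 := by
    rw [hm]
    exact ENNReal.toReal_le_of_le_ofReal zero_le_one (by simpa using hvolE)
  set t := m / 2 with htdef
  have ht0 : 0 ≤ t := by positivity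
  have ht : t ≤ 1/2 := by rw [htdef]; linarith
  set A := Icc (0:ℝ) t ∪ Icc (1-t) 1 with hA
  have hAm : MeasurableSet A := measurableSet_Icc.union measurableSet_Icc
  have hAsub : A ⊆ Icc (0:ℝ) 1 := by
    apply Set.union_subset
    · exact Set.Icc_subset_Icc le_rfl (by linarith)
    · exact Set.Icc_subset_Icc (by linarith) le_rfl
  have hvolA : volume A = ENNReal.ofReal m := by
    rw [hA, vol_union t ht0 ht]; congr 1; rw [htdef]; ring
  have hvolAE : volume A = volume E := by rw [hvolA, hm, ENNReal.ofReal_toReal hfin]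
  have hintA : ∫ x in A, f x = m^2/2 := by
    rw [hfe, hA, int_union t ht0 ht, htdef]; ring
  -- integrability
  have hfiE : IntegrableOn f E volume := (hcont.integrableOn_Icc (a := (0:ℝ)) (b := 1)).mono_set hE
  have hfiA : IntegrableOn f A volume := (hcont.integrableOn_Icc (a := (0:ℝ)) (b := 1)).mono_set hAsub
  -- split integrals
  have hsplitE : (∫ x in E ∩ A, f x) + ∫ x in E \ A, f x = ∫ x in E, f x :=
    integral_inter_add_diff hAm hfiE
  have hsplitA : (∫ x in A ∩ E, f x) + ∫ x in A \ E, f x = ∫ x in A, f x :=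
    integral_inter_add_diff hEm hfiA
  -- measures of differences equal
  have hmeas : volume (E \ A) = volume (A \ E) := by
    have h1 : volume (E ∩ A) + volume (E \ A) = volume E := measure_inter_add_diff E hAm
    have h2 : volume (A ∩ E) + volume (A \ E) = volume A := measure_inter_add_diff A hEm
    rw [Set.inter_comm] at h2
    rw [hvolAE] at h2
    have hfin' : volume (E ∩ A) ≠ ⊤ :=
      ne_top_of_le_ne_top hfin (measure_mono Set.inter_subset_left)
    exact (ENNReal.add_right_inj hfin').mp (h1.trans h2.symm)
  -- pointwise bounds
  have hlow : ∀ x ∈ E \ A, m ≤ f x := by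
    intro x hx
    obtain ⟨hxE, hxA⟩ := hx
    obtain ⟨hx0, hx1⟩ := hE hxE
    rw [Set.mem_union, not_or] at hxA
    obtain ⟨hA1, hA2⟩ := hxA
    have h1 : t < x := by
      by_contra h; exact hA1 ⟨hx0, le_of_not_gt h⟩
    have h2 : x < 1 - t := by
      by_contra h; exact hA2 ⟨le_of_not_gt h, hx1⟩
    rw [hf x]
    exact le_min (by rw [htdef] at h1; linarith) (by rw [htdef] at h2; linarith)
  have hhigh : ∀ x ∈ A \ E, f x ≤ m := by
    intro x hx
    rcases hx.1 with h | h
    · calc f x ≤ 2 * x := by rw [hf x]; exact min_le_left _ _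
      _ ≤ m := by have := h.2; rw [htdef] at this; linarith
    · calc f x ≤ 2 * (1 - x) := by rw [hf x]; exact min_le_right _ _
      _ ≤ m := by have := h.1; rw [htdef] at this; linarith
  -- integral bounds
  have hfiEd : IntegrableOn f (E \ A) volume := hfiE.mono_set Set.diff_subset
  have hfiAd : IntegrableOn f (A \ E) volume := hfiA.mono_set Set.diff_subset
  have hlowint : m * (volume (E \ A)).toReal ≤ ∫ x in E \ A, f x := by
    have := setIntegral_mono_on ((integrableOn_const_iff).mpr (Or.inr
        (lt_of_le_of_lt (measure_mono Set.diff_subset) (lt_of_le_of_lt hvolE (by norm_num)))))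
      hfiEd (hEm.diff hAm) hlow
    rwa [setIntegral_const, smul_eq_mul, mul_comm] at this
  have hhighint : ∫ x in A \ E, f x ≤ m * (volume (A \ E)).toReal := by
    have hAvol : volume (A \ E) < ⊤ := by
      rw [← hmeas]
      exact lt_of_le_of_lt (measure_mono Set.diff_subset) (lt_of_le_of_lt hvolE (by norm_num))
    have := setIntegral_mono_on hfiAd ((integrableOn_const_iff).mpr (Or.inr hAvol))
      (hAm.diff hEm) hhigh
    rwa [setIntegral_const, smul_eq_mul, mul_comm] at this
  have hinterEq : ∫ x in E ∩ A, f x = ∫ x in A ∩ E, f x := by rw [Set.inter_comm]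
  calc m ^ 2 / 2 = ∫ x in A, f x := hintA.symm
    _ = (∫ x in A ∩ E, f x) + ∫ x in A \ E, f x := hsplitA.symm
    _ ≤ (∫ x in A ∩ E, f x) + m * (volume (A \ E)).toReal := add_le_add_right hhighint _
    _ = (∫ x in E ∩ A, f x) + m * (volume (E \ A)).toReal := by rw [← hinterEq, ← hmeas]
    _ ≤ (∫ x in E ∩ A, f x) + ∫ x in E \ A, f x := add_le_add_right hlowint _
    _ = ∫ x in E, f x := hsplitE
end
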